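/- arXiv:2404.00753 — 10 statements merged into one kernel-verified Lean document; each statement's English description precedes it below -/
import Mathlib

section
/- Let g : ℝ₊ → ℝ₊ satisfy GRM (g nondecreasing and g(ω)/ω nonincreasing), and let ω₁, …, ωₙ be positive reals with n ≥ 1. Then the vector (g(ω₁)/Σg(ωᵢ), …, g(ωₙ)/Σg(ωᵢ)) is majorized by the vector (ω₁/Σωᵢ, …, ωₙ/Σωᵢ). -/
/-! Let `T` consist of `|S|` indices with the largest weights `ω i`. As `g` is nondecreasing,
`T` also carries the largest values `g (ω i)`, so `∑_S g ω ≤ ∑_T g ω`. As `g x / x` is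
nonincreasing, `g (ω i) * ω j ≤ ω i * g (ω j)` whenever `i ∈ T` and `j ∉ T`; summing over such
pairs gives `(∑_T g ω) / ∑ g ω ≤ (∑_T ω) / ∑ ω`. -/

open Finset

namespace Finset

variable {ι : Type*} [DecidableEq ι]

theorem sum_le_sum_of_card_eq_of_forall_notMem_le {M : Type*} [AddCommMonoid M] [PartialOrder M]
    [IsOrderedAddMonoid M] {S T : Finset ι} (hcard : S.card = T.card) (f : ι → M)
    (h : ∀ i ∈ T, ∀ j ∉ T, f j ≤ f i) :
    ∑ i ∈ S, f i ≤ ∑ i ∈ T, f i := by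
  have h_sdiff : ∑ i ∈ S \ T, f i ≤ ∑ i ∈ T \ S, f i := by
    let e := equivOfCardEq (card_sdiff_comm hcard)
    rw [← sum_coe_sort (S \ T), ← sum_coe_sort (T \ S), ← e.sum_comp]
    exact sum_le_sum fun x _ => h _ (mem_sdiff.1 (e x).2).1 _ (mem_sdiff.1 x.2).2
  calc ∑ i ∈ S, f i = ∑ i ∈ S ∩ T, f i + ∑ i ∈ S \ T, f i := (sum_inter_add_sum_sdiff S T f).symm
    _ ≤ ∑ i ∈ T ∩ S, f i + ∑ i ∈ T \ S, f i := by rw [inter_comm]; gcongr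
    _ = ∑ i ∈ T, f i := sum_inter_add_sum_sdiff T S f

variable [Fintype ι]

theorem exists_card_eq_forall_notMem_le {α : Type*} [LinearOrder α] (f : ι → α) {k : ℕ}
    (hk : k ≤ Fintype.card ι) :
    ∃ T : Finset ι, T.card = k ∧ ∀ i ∈ T, ∀ j ∉ T, f j ≤ f i := by
  induction k with
  | zero => exact ⟨∅, rfl, by simp⟩
  | succ k ih =>
    obtain ⟨T, hTcard, hT⟩ := ih (by omega)
    have hne : Tᶜ.Nonempty := by rw [← card_pos, card_compl]; omega
    obtain ⟨j, hj, hjmax⟩ := Tᶜ.exists_max_image f hne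
    refine ⟨insert j T, by rw [card_insert_of_notMem (mem_compl.1 hj), hTcard], ?_⟩
    intro i hi l hl
    rw [mem_insert, not_or] at hl
    rcases mem_insert.1 hi with rfl | hi
    · exact hjmax l (mem_compl.2 hl.2)
    · exact hT i hi l hl.2

theorem sum_mul_sum_univ_le_of_forall_notMem {R : Type*} [CommSemiring R] [PartialOrder R]
    [IsOrderedRing R] (T : Finset ι) (a b : ι → R)
    (h : ∀ i ∈ T, ∀ j ∉ T, a i * b j ≤ b i * a j) :
    (∑ i ∈ T, a i) * ∑ j, b j ≤ (∑ i ∈ T, b i) * ∑ j, a j := by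
  rw [← sum_add_sum_compl T b, ← sum_add_sum_compl T a, mul_add, mul_add]
  refine add_le_add (mul_comm _ _).le ?_
  rw [sum_mul_sum, sum_mul_sum]
  exact sum_le_sum fun i hi => sum_le_sum fun j hj => h i hi j (mem_compl.1 hj)

end Finset

theorem stmt_1 (n : ℕ) (hn : 1 ≤ n) (g : ℝ → ℝ)
    (hgpos : ∀ ω, 0 < ω → 0 < g ω)
    (hmono : ∀ a b, 0 < a → a ≤ b → g a ≤ g b)
    (hratio : ∀ a b, 0 < a → a ≤ b → g b / b ≤ g a / a)
    (ω : Fin n → ℝ) (hω : ∀ i, 0 < ω i) :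
    ∀ S : Finset (Fin n), ∃ T : Finset (Fin n), T.card = S.card ∧
      ∑ i ∈ S, g (ω i) / (∑ j, g (ω j)) ≤ ∑ i ∈ T, ω i / (∑ j, ω j) := by
  intro S
  obtain ⟨T, hTcard, hTtop⟩ := exists_card_eq_forall_notMem_le ω S.card_le_univ
  refine ⟨T, hTcard, ?_⟩
  have : Nonempty (Fin n) := ⟨⟨0, hn⟩⟩
  have hW : 0 < ∑ j, ω j := sum_pos (fun i _ => hω i) univ_nonempty
  have hG : 0 < ∑ j, g (ω j) := sum_pos (fun i _ => hgpos _ (hω i)) univ_nonempty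
  have hST : ∑ i ∈ S, g (ω i) ≤ ∑ i ∈ T, g (ω i) :=
    sum_le_sum_of_card_eq_of_forall_notMem_le hTcard.symm _
      fun i hi j hj => hmono _ _ (hω j) (hTtop i hi j hj)
  have hcross : (∑ i ∈ T, g (ω i)) * ∑ j, ω j ≤ (∑ i ∈ T, ω i) * ∑ j, g (ω j) :=
    sum_mul_sum_univ_le_of_forall_notMem T _ _ fun i hi j hj => by
      have := hratio _ _ (hω j) (hTtop i hi j hj)
      rwa [div_le_div_iff₀ (hω i) (hω j), mul_comm (g (ω j))] at this
  rw [← sum_div, ← sum_div]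
  calc (∑ i ∈ S, g (ω i)) / ∑ j, g (ω j) ≤ (∑ i ∈ T, g (ω i)) / ∑ j, g (ω j) := by gcongr
    _ ≤ (∑ i ∈ T, ω i) / ∑ j, ω j := (div_le_div_iff₀ hG hW).2 hcross
end

section
/- Let Ω̃, Ψ̃ be n×n positive diagonal matrices with diagonal entries (ω̃ᵢ), (ψ̃ᵢ), and let Ω be a positive diagonal matrix with entries (ωᵢ). Suppose both Ω̃ and Ψ̃ satisfy the pairwise condition: for all i, j with ωᵢ ≥ ω_j, 1 ≤ ω̃ᵢ/ω̃_j ≤ 2ωᵢ/ω_j − 1 (and similarly for ψ̃). Then for any t ∈ [0,1], the diagonal matrix tΩ̃ + (1−t)Ψ̃ also satisfies this pairwise condition with respect to Ω. -/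
theorem stmt_3 (n : ℕ) (ω ω' ψ : Fin n → ℝ)
    (hω : ∀ i, 0 < ω i) (hω' : ∀ i, 0 < ω' i) (hψ : ∀ i, 0 < ψ i)
    (hcondω' : ∀ i j, ω j ≤ ω i →
      1 ≤ ω' i / ω' j ∧ ω' i / ω' j ≤ 2 * (ω i / ω j) - 1)
    (hcondψ : ∀ i j, ω j ≤ ω i →
      1 ≤ ψ i / ψ j ∧ ψ i / ψ j ≤ 2 * (ω i / ω j) - 1)
    (t : ℝ) (ht0 : 0 ≤ t) (ht1 : t ≤ 1) :
    ∀ i j, ω j ≤ ω i →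
      1 ≤ (t * ω' i + (1 - t) * ψ i) / (t * ω' j + (1 - t) * ψ j) ∧
      (t * ω' i + (1 - t) * ψ i) / (t * ω' j + (1 - t) * ψ j) ≤
        2 * (ω i / ω j) - 1 := by
  intro i j hij
  obtain ⟨h1, h2⟩ := hcondω' i j hij
  obtain ⟨h3, h4⟩ := hcondψ i j hij
  have hwj := hω' j
  have hpj := hψ j
  have hden : 0 < t * ω' j + (1 - t) * ψ j := by
    rcases lt_or_eq_of_le ht0 with h | h
    · have : 0 < t * ω' j := mul_pos h hwj
      nlinarith [mul_nonneg (sub_nonneg.2 ht1) hpj.le]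
    · simp [← h]; linarith
  have e1 : ω' j ≤ ω' i := by
    have := (one_le_div hwj).mp h1; linarith
  have e2 : ω' i ≤ (2 * (ω i / ω j) - 1) * ω' j := (div_le_iff₀ hwj).mp h2
  have e3 : ψ j ≤ ψ i := by
    have := (one_le_div hpj).mp h3; linarith
  have e4 : ψ i ≤ (2 * (ω i / ω j) - 1) * ψ j := (div_le_iff₀ hpj).mp h4
  constructor
  · rw [one_le_div hden]
    nlinarith
  · rw [div_le_iff₀ hden]
    nlinarith
end

section
/- Let φ̃ᵢ > φ̃_j > 0 and ωᵢ > ω_j > 0 satisfy φ̃_j/φ̃ᵢ ≤ 2(ωᵢ/ω_j) − 1. Then (2φ̃_jω_j − (φ̃ᵢ + φ̃_j)ωᵢ)/((φ̃ᵢ − φ̃_j)(ωᵢ − ω_j)) ≥ 1. -/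
theorem stmt_7 (φi φj ωi ωj : ℝ) (hφi : 0 < φi) (hφj : φi < φj)
    (hωj : 0 < ωj) (hωi : ωj < ωi)
    (hratio : φj / φi ≤ 2 * (ωi / ωj) - 1) :
    1 ≤ (2 * φj * ωj - (φi + φj) * ωi) / ((φi - φj) * (ωi - ωj)) := by
  have hden : (φi - φj) * (ωi - ωj) < 0 := by nlinarith
  rw [le_div_iff_of_neg hden]
  have h1 : φj / φi * φi = φj := div_mul_cancel₀ _ hφi.ne'
  have h2 : ωi / ωj * ωj = ωi := div_mul_cancel₀ _ hωj.ne'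
  nlinarith [mul_le_mul_of_nonneg_right hratio (le_of_lt hφi),
    mul_le_mul_of_nonneg_right (mul_le_mul_of_nonneg_right hratio hφi.le) hωj.le]
end

section
/- Let n = 2 with positive weights ω₁ > ω₂ and ω̃₁, ω̃₂ > 0 satisfying 1 ≤ ω̃₁/ω̃₂ ≤ 2ω₁/ω₂ − 1. Then for every t ∈ [0,1], with φ̃ᵢ = 1/ω̃ᵢ, the quantity (t φ̃₁² ω₁ + (1−t) φ̃₂² ω₂) ≤ (t φ̃₁ + (1−t) φ̃₂)² (t ω₁ + (1−t) ω₂). -/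
theorem stmt_8 (ω1 ω2 ωt1 ωt2 : ℝ) (hω2 : 0 < ω2) (hω12 : ω2 < ω1)
    (hωt1 : 0 < ωt1) (hωt2 : 0 < ωt2)
    (h1 : 1 ≤ ωt1 / ωt2) (h2 : ωt1 / ωt2 ≤ 2 * (ω1 / ω2) - 1)
    (t : ℝ) (ht0 : 0 ≤ t) (ht1 : t ≤ 1) :
    t * (1 / ωt1) ^ 2 * ω1 + (1 - t) * (1 / ωt2) ^ 2 * ω2 ≤
      (t * (1 / ωt1) + (1 - t) * (1 / ωt2)) ^ 2 * (t * ω1 + (1 - t) * ω2) := by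
  set a := 1 / ωt1 with ha_def
  set b := 1 / ωt2 with hb_def
  have ha : 0 < a := by positivity
  have hb : 0 < b := by positivity
  -- from h1 : ωt2 ≤ ωt1, hence a ≤ b
  have h1' : ωt2 ≤ ωt1 := by
    have := (one_le_div hωt2).mp h1
    linarith
  have hab : a ≤ b := by
    rw [ha_def, hb_def]
    exact one_div_le_one_div_of_le hωt2 h1'
  -- from h2 : ωt1 * ω2 ≤ ωt2 * (2ω1 - ω2)
  have h2' : ωt1 * ω2 ≤ ωt2 * (2 * ω1 - ω2) := by
    have h := (div_le_iff₀ hωt2).mp h2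
    have hω2' : ω2 ≠ 0 := ne_of_gt hω2
    have : ωt1 * ω2 ≤ (2 * (ω1 / ω2) - 1) * ωt2 * ω2 := by
      exact mul_le_mul_of_nonneg_right h hω2.le
    calc ωt1 * ω2 ≤ (2 * (ω1 / ω2) - 1) * ωt2 * ω2 := this
      _ = ωt2 * (2 * ω1 - ω2) := by field_simp
  -- translate to a, b : b * ω2 ≤ a * (2ω1 - ω2)
  have hkey : b * ω2 ≤ a * (2 * ω1 - ω2) := by
    rw [ha_def, hb_def]
    rw [div_mul_eq_mul_div, div_mul_eq_mul_div, div_le_div_iff₀ hωt2 hωt1]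
    nlinarith [h2']
  have hA : 0 ≤ (b - a) * (a * (2 * ω1 - ω2) - b * ω2) := by
    apply mul_nonneg <;> linarith
  have hB : 0 ≤ (b - a) * (ω1 * (a + b) - 2 * b * ω2) := by
    apply mul_nonneg
    · linarith
    · nlinarith [sq_nonneg (ω1 - ω2), mul_pos ha hω2, mul_pos hb hω2]
  have hs : 0 ≤ 1 - t := by linarith
  have hC : 0 ≤ t * ((b - a) * (a * (2 * ω1 - ω2) - b * ω2)) +
      (1 - t) * ((b - a) * (ω1 * (a + b) - 2 * b * ω2)) := by
    have := mul_nonneg ht0 hA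
    have := mul_nonneg hs hB
    linarith
  nlinarith [mul_nonneg (mul_nonneg ht0 hs) hC]
end

section
/- Let n = 2 with positive weights ω₁ > ω₂ and ω̃₁, ω̃₂ > 0. If ω̃₁/ω̃₂ > 2ω₁/ω₂ − 1 or ω̃₁/ω̃₂ < 1, then there exists t ∈ (0,1) such that, with φ̃ᵢ = 1/ω̃ᵢ, (t φ̃₁² ω₁ + (1−t) φ̃₂² ω₂) > (t φ̃₁ + (1−t) φ̃₂)² (t ω₁ + (1−t) ω₂). -/
lemma aux1 (A B : ℝ) (hA : 0 < A) :
    ∃ t : ℝ, t ∈ Set.Ioo (0:ℝ) 1 ∧ 0 < (1 - t) * A + t * B := by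
  have hs : 0 < A + |B| := by positivity
  refine ⟨A / (2 * (A + |B|)), ⟨by positivity, ?_⟩, ?_⟩
  · have : A ≤ A + |B| := le_add_of_nonneg_right (abs_nonneg B)
    rw [div_lt_one (by linarith)]
    linarith
  · have h1 : B ≥ -|B| := neg_abs_le B
    have h2 : A / (2 * (A + |B|)) * (2 * (A + |B|)) = A := by
      field_simp
    nlinarith [mul_pos (div_pos hA (by linarith : (0:ℝ) < 2 * (A + |B|))) hs]

lemma aux (A B : ℝ) (h : 0 < A ∨ 0 < B) :
    ∃ t : ℝ, t ∈ Set.Ioo (0:ℝ) 1 ∧ 0 < (1 - t) * A + t * B := by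
  rcases h with h | h
  · exact aux1 A B h
  · obtain ⟨t, ⟨ht0, ht1⟩, hpos⟩ := aux1 B A h
    exact ⟨1 - t, ⟨by linarith, by linarith⟩, by linarith [hpos]⟩

theorem stmt_9 (ω1 ω2 ωt1 ωt2 : ℝ) (hω2 : 0 < ω2) (hω12 : ω2 < ω1)
    (hωt1 : 0 < ωt1) (hωt2 : 0 < ωt2)
    (h : ωt1 / ωt2 > 2 * (ω1 / ω2) - 1 ∨ ωt1 / ωt2 < 1) :
    ∃ t : ℝ, t ∈ Set.Ioo (0 : ℝ) 1 ∧
      t * (1 / ωt1) ^ 2 * ω1 + (1 - t) * (1 / ωt2) ^ 2 * ω2 >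
        (t * (1 / ωt1) + (1 - t) * (1 / ωt2)) ^ 2 * (t * ω1 + (1 - t) * ω2) := by
  set p1 : ℝ := 1 / ωt1 with hp1
  set p2 : ℝ := 1 / ωt2 with hp2
  have hp1pos : 0 < p1 := by positivity
  have hp2pos : 0 < p2 := by positivity
  have hinv1 : ωt1 * p1 = 1 := by rw [hp1]; field_simp
  have hinv2 : ωt2 * p2 = 1 := by rw [hp2]; field_simp
  set A : ℝ := (p1 - p2) * (ω1 * (p1 + p2) - 2 * p2 * ω2) with hA
  set B : ℝ := (p1 - p2) * (2 * p1 * ω1 - ω2 * (p1 + p2)) with hB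
  have key : 0 < A ∨ 0 < B := by
    rcases h with h | h
    · -- ωt1/ωt2 > 2ω1/ω2 - 1, cross-multiply
      right
      have h' : ωt1 * ω2 > (2 * ω1 - ω2) * ωt2 := by
        rw [gt_iff_lt, ← div_lt_div_iff₀ hω2 hωt2]
        have e : (2 * ω1 - ω2) / ω2 = 2 * (ω1 / ω2) - 1 := by
          field_simp
        rw [e]; exact h
      -- p2/p1 = ωt1/ωt2 > (2ω1-ω2)/ω2 > 1, so p2 > p1 and ω2(p1+p2) > 2ω1p1
      have hlt : ωt2 < ωt1 := by nlinarith
      have hpp : p1 < p2 := by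
        rw [hp1, hp2, div_lt_div_iff₀ hωt1 hωt2]; linarith
      have h2 : ω2 * (p1 + p2) - 2 * p1 * ω1 > 0 := by
        nlinarith [mul_pos hp1pos hp2pos, hinv1, hinv2,
          mul_pos (mul_pos (sub_pos.mpr h') hp1pos) hp2pos]
      rw [hB]; nlinarith
    · -- ωt1/ωt2 < 1, so ωt1 < ωt2, p1 > p2
      left
      have hlt : ωt1 < ωt2 := by
        rw [div_lt_one hωt2] at h; exact h
      have hpp : p2 < p1 := by
        rw [hp1, hp2, div_lt_div_iff₀ hωt2 hωt1]; linarith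
      have h2 : ω1 * (p1 + p2) - 2 * p2 * ω2 > 0 := by nlinarith
      rw [hA]; nlinarith
  obtain ⟨t, htmem, hpos⟩ := aux A B key
  obtain ⟨ht0, ht1⟩ := htmem
  refine ⟨t, ⟨ht0, ht1⟩, ?_⟩
  have identity : t * p1 ^ 2 * ω1 + (1 - t) * p2 ^ 2 * ω2
      - (t * p1 + (1 - t) * p2) ^ 2 * (t * ω1 + (1 - t) * ω2)
      = t * (1 - t) * ((1 - t) * A + t * B) := by
    rw [hA, hB]; ring
  have hpos2 : 0 < t * (1 - t) * ((1 - t) * A + t * B) := by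
    have : 0 < t * (1 - t) := by nlinarith
    exact mul_pos this hpos
  linarith [identity ▸ hpos2]
end

section
/- For every c > 0, ∫_{−∞}^{∞} (c + z²)^{−2} e^{−z²/2} dz = √(π/2)/c + (π(1−c)/(2c^{3/2})) e^{c/2} erfc(√(c/2)), where erfc(x) = (2/√π)∫_x^∞ e^{−r²} dr. -/
open Real MeasureTheory

noncomputable def erfc (x : ℝ) : ℝ :=
  (2 / Real.sqrt π) * ∫ r in Set.Ioi x, Real.exp (-r ^ 2)

/-!
Work with the weight `e^{-a z²}` and put `a = 1/2` at the end. Writing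
`1 / (c + z²)² = ∫₀^∞ t e^{-(c + z²) t} dt` and exchanging the integrals turns the left side into
`∫₀^∞ t e^{-ct} √(π / (t + a)) dt`. The substitution `t = x² - a` makes this
`2√π e^{ac} ∫_{√a}^∞ (x² - a) e^{-c x²} dx`, and one integration by parts reduces the `x²` moment
to the Gaussian tail `∫_{√a}^∞ e^{-c x²} dx = √π / (2√c) · erfc √(ac)`.
-/

open Set Filter Topology

theorem integral_Ioi_mul_exp_neg_mul {b : ℝ} (hb : 0 < b) :
    ∫ t in Ioi 0, t * exp (-(b * t)) = 1 / b ^ 2 := by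
  have h := integral_rpow_mul_exp_neg_mul_Ioi (a := 2) two_pos hb
  norm_num [Gamma_two, div_pow] at h
  simpa using h

theorem integrableOn_Ioi_mul_exp_neg_mul {b : ℝ} (hb : 0 < b) :
    IntegrableOn (fun t => t * exp (-(b * t))) (Ioi 0) := by
  simpa using integrableOn_rpow_mul_exp_neg_mul_rpow (s := 1) (p := 1) (by norm_num) one_pos hb

theorem integrable_exp_neg_mul_sq_div_add_sq_sq {a c : ℝ} (ha : 0 < a) (hc : 0 < c) :
    Integrable fun z : ℝ => exp (-a * z ^ 2) / (c + z ^ 2) ^ 2 := by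
  refine ((integrable_exp_neg_mul_sq ha).div_const (c ^ 2)).mono'
    ((by fun_prop : Continuous _).div (by fun_prop) fun z => by positivity).aestronglyMeasurable
    (ae_of_all _ fun z => ?_)
  rw [norm_of_nonneg (by positivity)]
  gcongr
  nlinarith [sq_nonneg z]

theorem integral_exp_neg_mul_sq_div_add_sq_sq_eq_integral_Ioi {a c : ℝ} (ha : 0 < a)
    (hc : 0 < c) :
    ∫ z : ℝ, exp (-a * z ^ 2) / (c + z ^ 2) ^ 2 =
      ∫ t in Ioi 0, t * exp (-(c * t)) * √(π / (t + a)) := by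
  set k : ℝ → ℝ → ℝ := fun z t => t * exp (-((c + z ^ 2) * t)) * exp (-a * z ^ 2)
  have inner_t (z : ℝ) : ∫ t in Ioi 0, k z t = exp (-a * z ^ 2) / (c + z ^ 2) ^ 2 := by
    rw [integral_mul_const, integral_Ioi_mul_exp_neg_mul (by positivity)]
    ring
  have inner_z (t : ℝ) : ∫ z, k z t = t * exp (-(c * t)) * √(π / (t + a)) := by
    have hk (z : ℝ) : k z t = t * exp (-(c * t)) * exp (-(t + a) * z ^ 2) := by
      simp only [k, mul_assoc, ← exp_add]
      ring_nf
    simp_rw [hk, integral_const_mul, integral_gaussian]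
  have hk_int : Integrable (Function.uncurry k) (volume.prod (volume.restrict (Ioi 0))) := by
    refine (integrable_prod_iff (by fun_prop)).2 ⟨ae_of_all _ fun z => ?_, ?_⟩
    · exact (integrableOn_Ioi_mul_exp_neg_mul (b := c + z ^ 2) (by positivity)).mul_const
        (exp (-a * z ^ 2))
    · refine (integrable_exp_neg_mul_sq_div_add_sq_sq ha hc).congr (ae_of_all _ fun z => ?_)
      dsimp only
      rw [← inner_t]
      refine setIntegral_congr_fun measurableSet_Ioi fun t (ht : 0 < t) => ?_
      exact (norm_of_nonneg (by positivity)).symm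
  calc ∫ z : ℝ, exp (-a * z ^ 2) / (c + z ^ 2) ^ 2
      = ∫ z, ∫ t in Ioi 0, k z t := by simp_rw [inner_t]
    _ = ∫ t in Ioi 0, ∫ z, k z t := integral_integral_swap hk_int
    _ = ∫ t in Ioi 0, t * exp (-(c * t)) * √(π / (t + a)) := by simp_rw [inner_z]

theorem image_sq_sub_Ioi_sqrt {a : ℝ} (ha : 0 ≤ a) :
    (fun x : ℝ => x ^ 2 - a) '' Ioi √a = Ioi 0 := by
  ext y
  constructor
  · rintro ⟨x, hx : √a < x, rfl⟩
    exact sub_pos.2 ((sqrt_lt' ((sqrt_nonneg a).trans_lt hx)).1 hx)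
  · intro (hy : 0 < y)
    refine ⟨√(y + a), sqrt_lt_sqrt ha (by linarith), ?_⟩
    simp [sq_sqrt (by linarith : 0 ≤ y + a)]

theorem integral_Ioi_zero_eq_integral_Ioi_sqrt_comp_sq_sub {a : ℝ} (ha : 0 ≤ a) (g : ℝ → ℝ) :
    ∫ t in Ioi 0, g t = ∫ x in Ioi √a, 2 * x * g (x ^ 2 - a) := by
  have hderiv (x : ℝ) (_ : x ∈ Ioi √a) :
      HasDerivWithinAt (fun x : ℝ => x ^ 2 - a) (2 * x) (Ioi √a) x := by
    simpa using ((hasDerivAt_pow 2 x).sub_const a).hasDerivWithinAt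
  have hinj : InjOn (fun x : ℝ => x ^ 2 - a) (Ioi √a) :=
    fun x (hx : √a < x) y (hy : √a < y) h => by nlinarith [sqrt_nonneg a]
  rw [← image_sq_sub_Ioi_sqrt ha,
    integral_image_eq_integral_abs_deriv_smul measurableSet_Ioi hderiv hinj]
  refine setIntegral_congr_fun measurableSet_Ioi fun x (hx : √a < x) => ?_
  rw [smul_eq_mul, abs_of_pos (by linarith [sqrt_nonneg a])]

theorem integrable_sq_mul_exp_neg_mul_sq {b : ℝ} (hb : 0 < b) :
    Integrable fun x : ℝ => x ^ 2 * exp (-b * x ^ 2) := by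
  simpa using integrable_rpow_mul_exp_neg_mul_sq hb (s := 2) (by norm_num)

theorem tendsto_mul_exp_neg_mul_sq_atTop {b : ℝ} (hb : 0 < b) :
    Tendsto (fun x : ℝ => x * exp (-b * x ^ 2)) atTop (𝓝 0) := by
  have h := (rpow_mul_exp_neg_mul_sq_isLittleO_exp_neg hb 1).trans_tendsto
    (tendsto_exp_atBot.comp (tendsto_id.const_mul_atTop_of_neg (by norm_num)))
  refine h.congr' ?_
  filter_upwards [eventually_gt_atTop 0] with x hx
  simp

theorem integral_Ioi_sq_mul_exp_neg_mul_sq {b : ℝ} (hb : 0 < b) (s : ℝ) :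
    ∫ x in Ioi s, x ^ 2 * exp (-b * x ^ 2) =
      (s * exp (-b * s ^ 2) + ∫ x in Ioi s, exp (-b * x ^ 2)) / (2 * b) := by
  have hderiv (x : ℝ) (_ : x ∈ Ici s) : HasDerivAt (fun x => -(x * exp (-b * x ^ 2)) / (2 * b))
      (x ^ 2 * exp (-b * x ^ 2) - exp (-b * x ^ 2) / (2 * b)) x := by
    have h := (((hasDerivAt_id' x).mul ((hasDerivAt_pow 2 x).const_mul (-b)).exp).neg).div_const
      (2 * b)
    refine h.congr_deriv ?_
    field_simp
    ring
  have h := integral_Ioi_of_hasDerivAt_of_tendsto' hderiv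
    ((integrable_sq_mul_exp_neg_mul_sq hb).sub
      ((integrable_exp_neg_mul_sq hb).div_const _)).integrableOn
    (by simpa using ((tendsto_mul_exp_neg_mul_sq_atTop hb).neg).div_const (2 * b))
  rw [integral_sub (integrable_sq_mul_exp_neg_mul_sq hb).integrableOn
    ((integrable_exp_neg_mul_sq hb).div_const _).integrableOn, integral_div,
    sub_eq_iff_eq_add] at h
  rw [h]
  field_simp
  ring

theorem integral_Ioi_exp_neg_mul_sq {b : ℝ} (hb : 0 < b) (s : ℝ) :
    ∫ x in Ioi s, exp (-b * x ^ 2) = √π / (2 * √b) * erfc (√b * s) := by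
  have hsb : 0 < √b := sqrt_pos.2 hb
  have h := integral_comp_mul_left_Ioi (fun r => exp (-r ^ 2)) s hsb
  simp only [mul_pow, sq_sqrt hb.le, smul_eq_mul] at h
  simp only [neg_mul, h, erfc]
  field_simp [(sqrt_pos.2 pi_pos).ne']

theorem integral_Ioi_mul_exp_neg_mul_mul_sqrt_pi_div_add {a : ℝ} (ha : 0 ≤ a) (c : ℝ) :
    ∫ t in Ioi 0, t * exp (-(c * t)) * √(π / (t + a)) =
      2 * √π * exp (c * a) * ∫ x in Ioi √a, (x ^ 2 - a) * exp (-c * x ^ 2) := by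
  rw [integral_Ioi_zero_eq_integral_Ioi_sqrt_comp_sq_sub ha, ← integral_const_mul]
  refine setIntegral_congr_fun measurableSet_Ioi fun x (hx : √a < x) => ?_
  have hx0 : 0 < x := (sqrt_nonneg a).trans_lt hx
  have hexp : exp (-(c * (x ^ 2 - a))) = exp (c * a) * exp (-c * x ^ 2) := by
    rw [← exp_add]
    ring_nf
  rw [sub_add_cancel, sqrt_div' _ (sq_nonneg x), sqrt_sq hx0.le, hexp]
  field_simp

theorem integral_exp_neg_mul_sq_div_add_sq_sq {a c : ℝ} (ha : 0 < a) (hc : 0 < c) :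
    ∫ z : ℝ, exp (-a * z ^ 2) / (c + z ^ 2) ^ 2 =
      √(π * a) / c + π * (1 - 2 * a * c) / (2 * c * √c) * exp (a * c) * erfc (√(a * c)) := by
  rw [integral_exp_neg_mul_sq_div_add_sq_sq_eq_integral_Ioi ha hc,
    integral_Ioi_mul_exp_neg_mul_mul_sqrt_pi_div_add ha.le]
  have hsplit : ∫ x in Ioi √a, (x ^ 2 - a) * exp (-c * x ^ 2) =
      (∫ x in Ioi √a, x ^ 2 * exp (-c * x ^ 2)) - a * ∫ x in Ioi √a, exp (-c * x ^ 2) := by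
    simp_rw [sub_mul]
    rw [integral_sub (integrable_sq_mul_exp_neg_mul_sq hc).integrableOn
      ((integrable_exp_neg_mul_sq hc).const_mul a).integrableOn, integral_const_mul]
  rw [hsplit, integral_Ioi_sq_mul_exp_neg_mul_sq hc, integral_Ioi_exp_neg_mul_sq hc,
    ← sqrt_mul hc.le, sq_sqrt ha.le]
  simp only [mul_comm c a, neg_mul]
  rw [exp_neg, sqrt_mul pi_pos.le]
  field_simp
  linear_combination (exp (a * c) * erfc √(a * c) * (1 - 2 * a * c)) * mul_self_sqrt pi_pos.le

theorem stmt_10 (c : ℝ) (hc : 0 < c) :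
    ∫ z : ℝ, Real.exp (-z ^ 2 / 2) / (c + z ^ 2) ^ 2 =
      Real.sqrt (π / 2) / c +
        (π * (1 - c) / (2 * c ^ ((3 : ℝ) / 2))) * Real.exp (c / 2) *
          erfc (Real.sqrt (c / 2)) := by
  have hc32 : c ^ ((3 : ℝ) / 2) = c * √c := by
    rw [show (3 : ℝ) / 2 = 1 + 1 / 2 by norm_num, rpow_add hc, rpow_one, sqrt_eq_rpow]
  rw [hc32]
  convert integral_exp_neg_mul_sq_div_add_sq_sq one_half_pos hc using 3 <;> ring_nf
end

section
/- Let a > 0 and let E(a) = (∫_a^∞ z e^{−z²/2} dz)/(∫_a^∞ e^{−z²/2} dz) be the mean of a standard normal truncated to (a, ∞). Then a(a²+3)/(a²+2) ≤ E(a) ≤ a + 1/a. -/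
/-!
Write `φ z = exp (-z²/2)` and `Q a = ∫_a^∞ φ`. Since `φ' = -z φ`, the numerator of `E a` is `φ a`,
so the claim is the Mills-ratio sandwich `a / (a² + 1) ≤ Q a / φ a ≤ (a² + 2) / (a (a² + 3))`.
Both sides come from one identity: if `r' = z r - m` and `r → 0`, then `(r φ)' = -m φ`, hence
`∫_a^∞ m φ = r a φ a`, and comparing `m` with `1` compares `r a φ a` with `Q a`. The choices
`r = z / (z² + 1)` and `r = (z² + 2) / (z (z² + 3))` give `m = 1 - 2 / (z² + 1)² ≤ 1` and
`m = 1 + 6 / (z (z² + 3))² ≥ 1`.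
-/

open Real MeasureTheory Set Filter Topology

lemma tendsto_zero_of_le_inv {r : ℝ → ℝ} (h : ∀ᶠ z in atTop, 0 ≤ r z ∧ r z ≤ z⁻¹) :
    Tendsto r atTop (𝓝 0) :=
  squeeze_zero' (h.mono fun _ hz => hz.1) (h.mono fun _ hz => hz.2) tendsto_inv_atTop_zero

lemma integrable_exp_neg_sq_div_two : Integrable fun z : ℝ => rexp (-z ^ 2 / 2) := by
  convert integrable_exp_neg_mul_sq (one_half_pos (α := ℝ)) using 3
  ring

lemma integrable_mul_exp_neg_sq_div_two : Integrable fun z : ℝ => z * rexp (-z ^ 2 / 2) := by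
  convert integrable_mul_exp_neg_mul_sq (one_half_pos (α := ℝ)) using 4
  ring

lemma tendsto_exp_neg_sq_div_two_atTop : Tendsto (fun z : ℝ => rexp (-z ^ 2 / 2)) atTop (𝓝 0) := by
  refine tendsto_exp_atBot.comp ?_
  convert tendsto_neg_atTop_atBot.comp
    ((tendsto_pow_atTop two_ne_zero).atTop_div_const (two_pos (α := ℝ))) using 2 with z
  simp [neg_div]

lemma hasDerivAt_exp_neg_sq_div_two (x : ℝ) :
    HasDerivAt (fun z : ℝ => rexp (-z ^ 2 / 2)) (-x * rexp (-x ^ 2 / 2)) x := by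
  refine (((hasDerivAt_id' x).fun_pow 2).fun_neg.div_const 2).exp.congr_deriv ?_
  push_cast; ring

lemma integral_Ioi_mul_exp_neg_sq_div_two_eq {r m : ℝ → ℝ} {a : ℝ}
    (hr : ∀ x ∈ Ici a, HasDerivAt r (x * r x - m x) x)
    (hr_top : Tendsto (fun z => r z * rexp (-z ^ 2 / 2)) atTop (𝓝 0))
    (hm : IntegrableOn (fun z => m z * rexp (-z ^ 2 / 2)) (Ioi a)) :
    ∫ z in Ioi a, m z * rexp (-z ^ 2 / 2) = r a * rexp (-a ^ 2 / 2) := by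
  have hderiv : ∀ x ∈ Ici a, HasDerivAt (fun z => -(r z * rexp (-z ^ 2 / 2)))
      (m x * rexp (-x ^ 2 / 2)) x := fun x hx =>
    ((hr x hx).mul (hasDerivAt_exp_neg_sq_div_two x)).neg.congr_deriv (by ring)
  rw [integral_Ioi_of_hasDerivAt_of_tendsto' hderiv hm (by simpa using hr_top.neg)]
  ring

lemma integrableOn_mul_exp_neg_sq_div_two {r m : ℝ → ℝ} {a C : ℝ}
    (hr : ∀ x ∈ Ici a, HasDerivAt r (x * r x - m x) x) (hm_bdd : ∀ x ∈ Ioi a, |m x| ≤ C) :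
    IntegrableOn (fun z => m z * rexp (-z ^ 2 / 2)) (Ioi a) := by
  have hm_eq : EqOn (fun x => x * r x - deriv r x) m (Ioi a) := fun x hx => by
    simp only [(hr x (Ioi_subset_Ici_self hx)).deriv]; ring
  have hr_cont : ContinuousOn r (Ioi a) := fun x hx =>
    (hr x (Ioi_subset_Ici_self hx)).continuousAt.continuousWithinAt
  -- `m` need not be measurable off `Ioi a`, but on it `m` agrees with a measurable function.
  have hm_meas : AEStronglyMeasurable m (volume.restrict (Ioi a)) :=
    (((continuousOn_id.mul hr_cont).aestronglyMeasurable measurableSet_Ioi).sub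
      (measurable_deriv r).aestronglyMeasurable).congr
      ((ae_restrict_mem measurableSet_Ioi).mono hm_eq)
  refine (integrable_exp_neg_sq_div_two.const_mul C).integrableOn.mono'
    (hm_meas.mul (by fun_prop)) ?_
  filter_upwards [ae_restrict_mem measurableSet_Ioi] with x hx
  rw [norm_mul, norm_of_nonneg (exp_pos _).le]
  exact mul_le_mul_of_nonneg_right (hm_bdd x hx) (exp_pos _).le

lemma le_integral_Ioi_exp_neg_sq_div_two_of_hasDerivAt {r m : ℝ → ℝ} {a C : ℝ}
    (hr : ∀ x ∈ Ici a, HasDerivAt r (x * r x - m x) x) (hr_top : Tendsto r atTop (𝓝 0))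
    (hm_bdd : ∀ x ∈ Ioi a, |m x| ≤ C) (hm_le : ∀ x ∈ Ioi a, m x ≤ 1) :
    r a * rexp (-a ^ 2 / 2) ≤ ∫ z in Ioi a, rexp (-z ^ 2 / 2) := by
  rw [← integral_Ioi_mul_exp_neg_sq_div_two_eq hr
    (by simpa using hr_top.mul tendsto_exp_neg_sq_div_two_atTop)
    (integrableOn_mul_exp_neg_sq_div_two hr hm_bdd)]
  refine setIntegral_mono_on (integrableOn_mul_exp_neg_sq_div_two hr hm_bdd)
    integrable_exp_neg_sq_div_two.integrableOn measurableSet_Ioi fun x hx => ?_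
  exact mul_le_of_le_one_left (exp_pos _).le (hm_le x hx)

lemma integral_Ioi_exp_neg_sq_div_two_le_of_hasDerivAt {r m : ℝ → ℝ} {a C : ℝ}
    (hr : ∀ x ∈ Ici a, HasDerivAt r (x * r x - m x) x) (hr_top : Tendsto r atTop (𝓝 0))
    (hm_bdd : ∀ x ∈ Ioi a, |m x| ≤ C) (hm_ge : ∀ x ∈ Ioi a, 1 ≤ m x) :
    ∫ z in Ioi a, rexp (-z ^ 2 / 2) ≤ r a * rexp (-a ^ 2 / 2) := by
  rw [← integral_Ioi_mul_exp_neg_sq_div_two_eq hr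
    (by simpa using hr_top.mul tendsto_exp_neg_sq_div_two_atTop)
    (integrableOn_mul_exp_neg_sq_div_two hr hm_bdd)]
  refine setIntegral_mono_on integrable_exp_neg_sq_div_two.integrableOn
    (integrableOn_mul_exp_neg_sq_div_two hr hm_bdd) measurableSet_Ioi fun x hx => ?_
  exact le_mul_of_one_le_left (exp_pos _).le (hm_ge x hx)

lemma integral_Ioi_mul_exp_neg_sq_div_two (a : ℝ) :
    ∫ z in Ioi a, z * rexp (-z ^ 2 / 2) = rexp (-a ^ 2 / 2) := by
  simpa using integral_Ioi_mul_exp_neg_sq_div_two_eq (r := fun _ => 1) (m := id) (a := a)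
    (fun x _ => (hasDerivAt_const x 1).congr_deriv (by simp))
    (by simpa using tendsto_exp_neg_sq_div_two_atTop)
    integrable_mul_exp_neg_sq_div_two.integrableOn

lemma div_sq_add_one_mul_exp_le_integral_Ioi (a : ℝ) :
    a / (a ^ 2 + 1) * rexp (-a ^ 2 / 2) ≤ ∫ z in Ioi a, rexp (-z ^ 2 / 2) := by
  refine le_integral_Ioi_exp_neg_sq_div_two_of_hasDerivAt (r := fun z => z / (z ^ 2 + 1))
    (m := fun z => 1 - 2 / (z ^ 2 + 1) ^ 2) (C := 1)
    (fun x _ => ?_) ?_ (fun x _ => ?_) (fun x _ => ?_)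
  · refine ((hasDerivAt_id' x).div ((hasDerivAt_pow 2 x).add_const 1)
      (by positivity)).congr_deriv ?_
    field_simp
    ring
  · refine tendsto_zero_of_le_inv ((eventually_gt_atTop 0).mono fun z hz => ⟨by positivity, ?_⟩)
    rw [div_le_iff₀ (by positivity)]
    field_simp
    nlinarith
  · have h : 2 / (x ^ 2 + 1) ^ 2 ≤ 2 := div_le_self two_pos.le (one_le_pow₀ (by nlinarith))
    rw [abs_le]
    constructor <;> linarith [show 0 ≤ 2 / (x ^ 2 + 1) ^ 2 by positivity]
  · linarith [show 0 ≤ 2 / (x ^ 2 + 1) ^ 2 by positivity]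

lemma integral_Ioi_exp_neg_sq_div_two_le {a : ℝ} (ha : 0 < a) :
    ∫ z in Ioi a, rexp (-z ^ 2 / 2) ≤ (a ^ 2 + 2) / (a * (a ^ 2 + 3)) * rexp (-a ^ 2 / 2) := by
  refine integral_Ioi_exp_neg_sq_div_two_le_of_hasDerivAt
    (r := fun z => (z ^ 2 + 2) / (z * (z ^ 2 + 3)))
    (m := fun z => 1 + 6 / (z * (z ^ 2 + 3)) ^ 2) (C := 1 + 6 / (a * (a ^ 2 + 3)) ^ 2)
    (fun x hx => ?_) ?_ (fun x hx => ?_) (fun x _ => ?_)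
  · have hx0 : x ≠ 0 := (ha.trans_le hx).ne'
    refine (((hasDerivAt_pow 2 x).add_const 2).div ((hasDerivAt_id' x).fun_mul
      ((hasDerivAt_pow 2 x).add_const 3)) (by positivity)).congr_deriv ?_
    field_simp
    ring
  · refine tendsto_zero_of_le_inv ((eventually_gt_atTop 0).mono fun z hz => ⟨by positivity, ?_⟩)
    rw [div_le_iff₀ (by positivity)]
    field_simp
    linarith
  · have hx0 : 0 ≤ x := (ha.trans hx).le
    have hax : a ≤ x := hx.le
    rw [abs_of_pos (by positivity)]
    gcongr
  · linarith [show 0 ≤ 6 / (x * (x ^ 2 + 3)) ^ 2 by positivity]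

theorem stmt_12 (a : ℝ) (ha : 0 < a) :
    a * (a ^ 2 + 3) / (a ^ 2 + 2) ≤
      (∫ z in Set.Ioi a, z * Real.exp (-z ^ 2 / 2)) /
        (∫ z in Set.Ioi a, Real.exp (-z ^ 2 / 2)) ∧
    (∫ z in Set.Ioi a, z * Real.exp (-z ^ 2 / 2)) /
        (∫ z in Set.Ioi a, Real.exp (-z ^ 2 / 2)) ≤ a + 1 / a := by
  rw [integral_Ioi_mul_exp_neg_sq_div_two]
  have h_lower := div_sq_add_one_mul_exp_le_integral_Ioi a
  have h_upper := integral_Ioi_exp_neg_sq_div_two_le ha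
  have hQ : 0 < ∫ z in Ioi a, rexp (-z ^ 2 / 2) := lt_of_lt_of_le (by positivity) h_lower
  constructor
  · rw [le_div_iff₀ hQ]
    calc a * (a ^ 2 + 3) / (a ^ 2 + 2) * ∫ z in Ioi a, rexp (-z ^ 2 / 2)
        ≤ a * (a ^ 2 + 3) / (a ^ 2 + 2) *
            ((a ^ 2 + 2) / (a * (a ^ 2 + 3)) * rexp (-a ^ 2 / 2)) := by gcongr
      _ = rexp (-a ^ 2 / 2) := by field_simp
  · rw [div_le_iff₀ hQ]
    calc rexp (-a ^ 2 / 2) = (a + 1 / a) * (a / (a ^ 2 + 1) * rexp (-a ^ 2 / 2)) := by field_simp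
      _ ≤ (a + 1 / a) * ∫ z in Ioi a, rexp (-z ^ 2 / 2) := by gcongr
end

section
/- For all x > 0, the Gaussian Q-function satisfies Q(x) = (1/√(2π))∫_x^∞ e^{−z²/2} dz ≤ (1/√(2π)) ((x²+2)/(x(x²+3))) e^{−x²/2}. -/
/-!
With `G y = pericBound y = (y² + 2) / (y (y² + 3)) · e^{-y²/2}` one computes
`-G' y = (1 + 6 / (y (y² + 3))²) · e^{-y²/2} ≥ e^{-y²/2}` for `y > 0`, and `G → 0` at infinity.
Integrating `-G'` over `(x, ∞)` therefore gives `∫_x^∞ e^{-z²/2} dz ≤ G x`.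
-/

open Real MeasureTheory Filter Set Topology

theorem setIntegral_Ioi_le_sub_of_hasDerivAt {f F F' : ℝ → ℝ} {a l : ℝ}
    (hF : ∀ x ∈ Ici a, HasDerivAt F (F' x) x) (hlim : Tendsto F atTop (𝓝 l))
    (hf_nonneg : ∀ x ∈ Ioi a, 0 ≤ f x) (hf_le : ∀ x ∈ Ioi a, f x ≤ -F' x) :
    ∫ x in Ioi a, f x ≤ F a - l := by
  have hF'_nonpos : ∀ x ∈ Ioi a, F' x ≤ 0 := fun x hx =>
    neg_nonneg.1 ((hf_nonneg x hx).trans (hf_le x hx))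
  calc ∫ x in Ioi a, f x ≤ ∫ x in Ioi a, -F' x :=
        integral_mono_of_nonneg ((ae_restrict_iff' measurableSet_Ioi).2 (.of_forall hf_nonneg))
          (integrableOn_Ioi_deriv_of_nonpos' hF hF'_nonpos hlim).neg
          ((ae_restrict_iff' measurableSet_Ioi).2 (.of_forall hf_le))
    _ = F a - l := by
      rw [integral_neg, integral_Ioi_of_hasDerivAt_of_nonpos' hF hF'_nonpos hlim, neg_sub]

noncomputable def pericBound (y : ℝ) : ℝ := (y ^ 2 + 2) / (y * (y ^ 2 + 3)) * exp (-y ^ 2 / 2)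

theorem hasDerivAt_pericBound {y : ℝ} (hy : y ≠ 0) :
    HasDerivAt pericBound (-((1 + 6 / (y * (y ^ 2 + 3)) ^ 2) * exp (-y ^ 2 / 2))) y := by
  have hden : y * (y ^ 2 + 3) ≠ 0 := mul_ne_zero hy (by positivity)
  have hrat : HasDerivAt (fun y : ℝ => (y ^ 2 + 2) / (y * (y ^ 2 + 3)))
      ((2 * y * (y * (y ^ 2 + 3)) - (y ^ 2 + 2) * (3 * y ^ 2 + 3)) / (y * (y ^ 2 + 3)) ^ 2) y := by
    refine (((hasDerivAt_pow 2 y).add_const 2).div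
      ((hasDerivAt_id' y).mul ((hasDerivAt_pow 2 y).add_const 3)) hden).congr_deriv ?_
    norm_num
    ring
  have hexp : HasDerivAt (fun y : ℝ => exp (-y ^ 2 / 2)) (exp (-y ^ 2 / 2) * -y) y := by
    have : HasDerivAt (fun y : ℝ => -y ^ 2 / 2) (-y) y :=
      ((hasDerivAt_pow 2 y).neg.div_const 2).congr_deriv (by ring)
    exact this.exp
  refine (hrat.mul hexp).congr_deriv ?_
  field_simp
  ring

theorem tendsto_pericBound_atTop : Tendsto pericBound atTop (𝓝 0) := by
  have hexp : Tendsto (fun y : ℝ => exp (-y ^ 2 / 2)) atTop (𝓝 0) := by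
    refine tendsto_exp_atBot.comp ?_
    simp only [neg_div]
    exact tendsto_neg_atTop_atBot.comp
      ((tendsto_pow_atTop two_ne_zero).atTop_div_const two_pos)
  refine squeeze_zero' ?_ ?_ hexp
  · filter_upwards [eventually_gt_atTop 0] with y hy
    unfold pericBound
    positivity
  · filter_upwards [eventually_ge_atTop 1] with y hy
    refine mul_le_of_le_one_left (exp_pos _).le ?_
    rw [div_le_one (by positivity)]
    nlinarith

theorem integral_exp_neg_sq_half_Ioi_le_pericBound {x : ℝ} (hx : 0 < x) :
    ∫ z in Ioi x, exp (-z ^ 2 / 2) ≤ pericBound x := by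
  simpa using setIntegral_Ioi_le_sub_of_hasDerivAt
    (fun y hy => hasDerivAt_pericBound (hx.trans_le hy).ne') tendsto_pericBound_atTop
    (fun y _ => (exp_pos _).le)
    (fun y _ => by
      rw [neg_neg]
      exact le_mul_of_one_le_left (exp_pos _).le (le_add_of_nonneg_right (by positivity)))

theorem stmt_13 (x : ℝ) (hx : 0 < x) :
    (1 / Real.sqrt (2 * π)) * ∫ z in Set.Ioi x, Real.exp (-z ^ 2 / 2) ≤
      (1 / Real.sqrt (2 * π)) * ((x ^ 2 + 2) / (x * (x ^ 2 + 3))) *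
        Real.exp (-x ^ 2 / 2) := by
  rw [mul_assoc]
  exact mul_le_mul_of_nonneg_left (integral_exp_neg_sq_half_Ioi_le_pericBound hx) (by positivity)
end

section
/- Define g_k(ω) = (∫_{−k/√ω}^{k/√ω} (1/√(2π)) e^{−z²/2} dz)^{−1} for ω > 0 and k > 0. Then g_k is nondecreasing in ω and ω ↦ g_k(ω)/ω is nonincreasing in ω. -/
open Real MeasureTheory

theorem stmt_18 (k : ℝ) (hk : 0 < k) (g : ℝ → ℝ)
    (hg : ∀ ω, 0 < ω →
      g ω = (∫ z in (-(k / Real.sqrt ω))..(k / Real.sqrt ω),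
        (1 / Real.sqrt (2 * π)) * Real.exp (-z ^ 2 / 2))⁻¹) :
    (∀ a b, 0 < a → a ≤ b → g a ≤ g b) ∧
    (∀ a b, 0 < a → a ≤ b → g b / b ≤ g a / a) := by
  set φ : ℝ → ℝ := fun z => (1 / Real.sqrt (2 * π)) * Real.exp (-z ^ 2 / 2) with hφdef
  have hφc : Continuous φ := by
    apply Continuous.mul continuous_const
    exact (Real.continuous_exp.comp (by continuity))
  have hφpos : ∀ z, 0 < φ z := fun z => by
    apply mul_pos _ (Real.exp_pos _)
    have : (0:ℝ) < Real.sqrt (2 * π) := Real.sqrt_pos.mpr (by positivity)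
    positivity
  have hIpos : ∀ c : ℝ, 0 < c → 0 < ∫ z in (-c)..c, φ z := by
    intro c hc
    exact intervalIntegral.intervalIntegral_pos_of_pos
      (hφc.intervalIntegrable _ _) hφpos (by linarith)
  -- c ω
  have hcpos : ∀ ω : ℝ, 0 < ω → 0 < k / Real.sqrt ω := fun ω hω =>
    div_pos hk (Real.sqrt_pos.mpr hω)
  have hgeq : ∀ ω, 0 < ω → g ω = (∫ z in (-(k / Real.sqrt ω))..(k / Real.sqrt ω), φ z)⁻¹ :=
    hg
  have hcmono : ∀ a b : ℝ, 0 < a → a ≤ b → k / Real.sqrt b ≤ k / Real.sqrt a := by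
    intro a b ha hab
    apply div_le_div_of_nonneg_left hk.le (Real.sqrt_pos.mpr ha)
    exact Real.sqrt_le_sqrt hab
  have hImono : ∀ a b : ℝ, 0 < a → a ≤ b →
      (∫ z in (-(k / Real.sqrt b))..(k / Real.sqrt b), φ z)
        ≤ ∫ z in (-(k / Real.sqrt a))..(k / Real.sqrt a), φ z := by
    intro a b ha hab
    have h1 := hcmono a b ha hab
    have hb := hcpos b (lt_of_lt_of_le ha hab)
    refine intervalIntegral.integral_mono_interval (by linarith) (by linarith) h1 ?_
      (hφc.intervalIntegrable _ _)
    exact Filter.Eventually.of_forall fun z => (hφpos z).le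
  constructor
  · intro a b ha hab
    have hb : 0 < b := lt_of_lt_of_le ha hab
    rw [hgeq a ha, hgeq b hb]
    exact inv_anti₀ (hIpos _ (hcpos b hb)) (hImono a b ha hab)
  · intro a b ha hab
    have hb : 0 < b := lt_of_lt_of_le ha hab
    -- key: ω * I(ω) = ∫ u in -k..k, sqrt ω * φ (u / sqrt ω)
    have key : ∀ ω : ℝ, 0 < ω →
        ω * ∫ z in (-(k / Real.sqrt ω))..(k / Real.sqrt ω), φ z
          = ∫ u in (-k)..k, Real.sqrt ω * φ (u / Real.sqrt ω) := by
      intro ω hω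
      have hs : (0:ℝ) < Real.sqrt ω := Real.sqrt_pos.mpr hω
      have h1 : (∫ u in (-k)..k, Real.sqrt ω * φ (u / Real.sqrt ω))
          = Real.sqrt ω * ∫ u in (-k)..k, φ (u / Real.sqrt ω) :=
        intervalIntegral.integral_const_mul _ _
      rw [h1, intervalIntegral.integral_comp_div (f := φ) hs.ne', smul_eq_mul, ← mul_assoc,
        Real.mul_self_sqrt hω.le, neg_div]
    have hmono : ∀ u : ℝ, Real.sqrt a * φ (u / Real.sqrt a) ≤ Real.sqrt b * φ (u / Real.sqrt b) := by
      intro u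
      have hsa : (0:ℝ) < Real.sqrt a := Real.sqrt_pos.mpr ha
      have hsb : (0:ℝ) < Real.sqrt b := Real.sqrt_pos.mpr hb
      have hsab : Real.sqrt a ≤ Real.sqrt b := Real.sqrt_le_sqrt hab
      apply mul_le_mul hsab _ (hφpos _).le hsb.le
      simp only [hφdef]
      apply mul_le_mul_of_nonneg_left _ (by positivity)
      apply Real.exp_le_exp.mpr
      rw [div_pow, div_pow, neg_div, neg_div, neg_le_neg_iff, div_div, div_div]
      apply div_le_div_of_nonneg_left (by positivity) (by positivity)
      have : Real.sqrt a ^ 2 ≤ Real.sqrt b ^ 2 := by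
        apply pow_le_pow_left₀ hsa.le hsab
      nlinarith
    have hint : ∫ u in (-k)..k, Real.sqrt a * φ (u / Real.sqrt a)
        ≤ ∫ u in (-k)..k, Real.sqrt b * φ (u / Real.sqrt b) := by
      apply intervalIntegral.integral_mono_on (by linarith)
      · exact (continuous_const.mul (hφc.comp (continuous_id.div_const _))).intervalIntegrable _ _
      · exact (continuous_const.mul (hφc.comp (continuous_id.div_const _))).intervalIntegrable _ _
      · intro x _; exact hmono x
    have hkey : a * (∫ z in (-(k / Real.sqrt a))..(k / Real.sqrt a), φ z)
        ≤ b * (∫ z in (-(k / Real.sqrt b))..(k / Real.sqrt b), φ z) := by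
      rw [key a ha, key b hb]; exact hint
    have e : ∀ x y : ℝ, x⁻¹ / y = (y * x)⁻¹ := fun x y => by
      rw [mul_inv, div_eq_mul_inv, mul_comm]
    rw [hgeq a ha, hgeq b hb, e, e]
    exact inv_anti₀ (mul_pos ha (hIpos _ (hcpos a ha))) hkey
end

section
/- Let Ω and Ω̃ be n×n diagonal positive definite matrices whose diagonal entries satisfy the pairwise condition 1 ≤ ω̃ᵢ/ω̃_j ≤ 2ωᵢ/ω_j − 1 whenever ωᵢ ≥ ω_j. Then for every unit vector u ∈ ℝⁿ, (uᵀΩ̃⁻¹u)^{−1}(uᵀΩ̃⁻¹ΩΩ̃⁻¹u)(uᵀΩ̃⁻¹u)^{−1} ≤ uᵀΩu; that is, the variance of the fixed-weight feasible WLS estimate along u is at most that of the OLS estimate. -/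
lemma ordered3 (a b c x y z : ℝ) (hb : 0 < b) (hc : 0 < c)
    (hx : 0 < x) (hy : 0 < y) (hz : 0 < z)
    (hab : b ≤ a)
    (hc1 : 1 ≤ x / y ∧ x / y ≤ 2 * (a / b) - 1)
    (hc2 : 1 ≤ x / z ∧ x / z ≤ 2 * (a / c) - 1)
    (hc3 : 1 ≤ y / z ∧ y / z ≤ 2 * (b / c) - 1) :
    0 ≤ a / (y * z) - a / x ^ 2 + (b / (x * z) - b / y ^ 2) +
      (c / (x * y) - c / z ^ 2) := by
  obtain ⟨h1, h1'⟩ := hc1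
  obtain ⟨h2, h2'⟩ := hc2
  obtain ⟨h3, h3'⟩ := hc3
  have hyx : y ≤ x := by rw [le_div_iff₀ hy, one_mul] at h1; exact h1
  have hzy : z ≤ y := by rw [le_div_iff₀ hz, one_mul] at h3; exact h3
  have H1 : b * (x + y) ≤ 2 * a * y := by
    rw [div_le_iff₀ hy] at h1'
    have e : (2 * (a / b) - 1) * y * b = 2 * a * y - b * y := by field_simp
    nlinarith [mul_le_mul_of_nonneg_right h1' hb.le]
  have H2 : c * (x + z) ≤ 2 * a * z := by
    rw [div_le_iff₀ hz] at h2'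
    have e : (2 * (a / c) - 1) * z * c = 2 * a * z - c * z := by field_simp
    nlinarith [mul_le_mul_of_nonneg_right h2' hc.le]
  have H3 : c * (y + z) ≤ 2 * b * z := by
    rw [div_le_iff₀ hz] at h3'
    have e : (2 * (b / c) - 1) * z * c = 2 * b * z - c * z := by field_simp
    nlinarith [mul_le_mul_of_nonneg_right h3' hc.le]
  have n1 : 0 ≤ (2 * b * z - c * (y + z)) * (x * y * (y - z)) :=
    mul_nonneg (by linarith) (mul_nonneg (mul_nonneg hx.le hy.le) (by linarith))
  have n2 : 0 ≤ (2 * a * z - c * (x + z)) * (x * y * (y - z)) :=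
    mul_nonneg (by linarith) (mul_nonneg (mul_nonneg hx.le hy.le) (by linarith))
  have n3 : 0 ≤ (2 * a * y - b * (x + y)) * (z * z * (x - y)) :=
    mul_nonneg (by linarith) (mul_nonneg (mul_nonneg hz.le hz.le) (by linarith))
  have n4 : 0 ≤ (2 * b * z - c * (y + z)) * (x * y * (x - y)) :=
    mul_nonneg (by linarith) (mul_nonneg (mul_nonneg hx.le hy.le) (by linarith))
  have n5 : 0 ≤ (a - b) * (y * z * (x - y) * (x - y)) :=
    mul_nonneg (by linarith)
      (mul_nonneg (mul_nonneg (mul_nonneg hy.le hz.le) (by linarith)) (by linarith))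
  have n6 : 0 ≤ (a - b) * (y * z * (x - y) * (y - z)) :=
    mul_nonneg (by linarith)
      (mul_nonneg (mul_nonneg (mul_nonneg hy.le hz.le) (by linarith)) (by linarith))
  have hT : 0 ≤ a * x ^ 2 * y * z + b * x * y ^ 2 * z + c * x * y * z ^ 2 -
      a * y ^ 2 * z ^ 2 - b * x ^ 2 * z ^ 2 - c * x ^ 2 * y ^ 2 := by linarith
  have e : a / (y * z) - a / x ^ 2 + (b / (x * z) - b / y ^ 2) +
      (c / (x * y) - c / z ^ 2) =
      (a * x ^ 2 * y * z + b * x * y ^ 2 * z + c * x * y * z ^ 2 -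
        a * y ^ 2 * z ^ 2 - b * x ^ 2 * z ^ 2 - c * x ^ 2 * y ^ 2) /
        (x ^ 2 * y ^ 2 * z ^ 2) := by
    field_simp
    ring
  rw [e]
  positivity

lemma keyg {n : ℕ} (ω ωt : Fin n → ℝ)
    (hω : ∀ i, 0 < ω i) (hωt : ∀ i, 0 < ωt i)
    (hcond : ∀ i j, ω j ≤ ω i →
      1 ≤ ωt i / ωt j ∧ ωt i / ωt j ≤ 2 * (ω i / ω j) - 1)
    (i j k : Fin n) :
    0 ≤ ω i / (ωt j * ωt k) - ω i / (ωt i) ^ 2 +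
      (ω j / (ωt i * ωt k) - ω j / (ωt j) ^ 2) +
      (ω k / (ωt i * ωt j) - ω k / (ωt k) ^ 2) := by
  rcases le_total (ω i) (ω j) with hij | hji
  · rcases le_total (ω j) (ω k) with hjk | hkj
    · exact (ordered3 (ω k) (ω j) (ω i) (ωt k) (ωt j) (ωt i) (hω j) (hω i)
        (hωt k) (hωt j) (hωt i) hjk (hcond k j hjk) (hcond k i (hij.trans hjk))
        (hcond j i hij)).trans_eq (by ring)
    · rcases le_total (ω i) (ω k) with hik | hki
      · exact (ordered3 (ω j) (ω k) (ω i) (ωt j) (ωt k) (ωt i) (hω k) (hω i)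
          (hωt j) (hωt k) (hωt i) hkj (hcond j k hkj) (hcond j i hij)
          (hcond k i hik)).trans_eq (by ring)
      · exact (ordered3 (ω j) (ω i) (ω k) (ωt j) (ωt i) (ωt k) (hω i) (hω k)
          (hωt j) (hωt i) (hωt k) hij (hcond j i hij) (hcond j k hkj)
          (hcond i k hki)).trans_eq (by ring)
  · rcases le_total (ω j) (ω k) with hjk | hkj
    · rcases le_total (ω i) (ω k) with hik | hki
      · exact (ordered3 (ω k) (ω i) (ω j) (ωt k) (ωt i) (ωt j) (hω i) (hω j)
          (hωt k) (hωt i) (hωt j) hik (hcond k i hik) (hcond k j hjk)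
          (hcond i j hji)).trans_eq (by ring)
      · exact (ordered3 (ω i) (ω k) (ω j) (ωt i) (ωt k) (ωt j) (hω k) (hω j)
          (hωt i) (hωt k) (hωt j) hki (hcond i k hki) (hcond i j hji)
          (hcond k j hjk)).trans_eq (by ring)
    · exact (ordered3 (ω i) (ω j) (ω k) (ωt i) (ωt j) (ωt k) (hω j) (hω k)
        (hωt i) (hωt j) (hωt k) hji (hcond i j hji) (hcond i k (hkj.trans hji))
        (hcond j k hkj)).trans_eq (by ring)

lemma fact3 {n : ℕ} (f g h : Fin n → ℝ) :
    (∑ i, f i) * (∑ i, g i) * (∑ i, h i) = ∑ i, ∑ j, ∑ k, f i * g j * h k := by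
  rw [Finset.sum_mul_sum, Finset.sum_mul]
  refine Finset.sum_congr rfl fun i _ => ?_
  rw [Finset.sum_mul]
  refine Finset.sum_congr rfl fun j _ => ?_
  rw [Finset.mul_sum]

theorem stmt_19 (n : ℕ) (ω ωt : Fin n → ℝ)
    (hω : ∀ i, 0 < ω i) (hωt : ∀ i, 0 < ωt i)
    (hcond : ∀ i j, ω j ≤ ω i →
      1 ≤ ωt i / ωt j ∧ ωt i / ωt j ≤ 2 * (ω i / ω j) - 1)
    (u : Fin n → ℝ) (hu : ∑ i, (u i) ^ 2 = 1) :
    (∑ i, (u i) ^ 2 / ωt i)⁻¹ *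
        (∑ i, (u i) ^ 2 * ω i / (ωt i) ^ 2) *
        (∑ i, (u i) ^ 2 / ωt i)⁻¹ ≤
      ∑ i, (u i) ^ 2 * ω i := by
  have hA : ∀ i, (0:ℝ) ≤ (u i) ^ 2 := fun i => sq_nonneg _
  have hex : ∃ i, u i ≠ 0 := by
    by_contra h
    push_neg at h
    simp [h] at hu
  obtain ⟨i0, hi0⟩ := hex
  have hS1 : 0 < ∑ i, (u i) ^ 2 / ωt i := by
    have h0 : 0 < (u i0) ^ 2 / ωt i0 :=
      div_pos (by positivity) (hωt i0)
    exact lt_of_lt_of_le h0 (Finset.single_le_sum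
      (fun i _ => div_nonneg (hA i) (hωt i).le) (Finset.mem_univ i0))
  have key : 0 ≤ ∑ i, ∑ j, ∑ k, (u i) ^ 2 * (u j) ^ 2 * (u k) ^ 2 *
      (ω i / (ωt j * ωt k) - ω i / (ωt i) ^ 2 +
       (ω j / (ωt i * ωt k) - ω j / (ωt j) ^ 2) +
       (ω k / (ωt i * ωt j) - ω k / (ωt k) ^ 2)) := by
    refine Finset.sum_nonneg fun i _ => Finset.sum_nonneg fun j _ =>
      Finset.sum_nonneg fun k _ => mul_nonneg (by positivity)
        (keyg ω ωt hω hωt hcond i j k)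
  have e1 : (∑ i, (u i) ^ 2 * ω i) * (∑ i, (u i) ^ 2 / ωt i) *
      (∑ i, (u i) ^ 2 / ωt i) =
      ∑ i, ∑ j, ∑ k, ((u i) ^ 2 * ω i) * ((u j) ^ 2 / ωt j) *
        ((u k) ^ 2 / ωt k) := fact3 _ _ _
  have e2 : (∑ i, (u i) ^ 2 / ωt i) * (∑ i, (u i) ^ 2 * ω i) *
      (∑ i, (u i) ^ 2 / ωt i) =
      ∑ i, ∑ j, ∑ k, ((u i) ^ 2 / ωt i) * ((u j) ^ 2 * ω j) *
        ((u k) ^ 2 / ωt k) := fact3 _ _ _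
  have e3 : (∑ i, (u i) ^ 2 / ωt i) * (∑ i, (u i) ^ 2 / ωt i) *
      (∑ i, (u i) ^ 2 * ω i) =
      ∑ i, ∑ j, ∑ k, ((u i) ^ 2 / ωt i) * ((u j) ^ 2 / ωt j) *
        ((u k) ^ 2 * ω k) := fact3 _ _ _
  have f1 : (∑ i, (u i) ^ 2 * ω i / (ωt i) ^ 2) * (∑ i, (u i) ^ 2) *
      (∑ i, (u i) ^ 2) =
      ∑ i, ∑ j, ∑ k, ((u i) ^ 2 * ω i / (ωt i) ^ 2) * ((u j) ^ 2) *
        ((u k) ^ 2) := fact3 _ _ _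
  have f2 : (∑ i, (u i) ^ 2) * (∑ i, (u i) ^ 2 * ω i / (ωt i) ^ 2) *
      (∑ i, (u i) ^ 2) =
      ∑ i, ∑ j, ∑ k, ((u i) ^ 2) * ((u j) ^ 2 * ω j / (ωt j) ^ 2) *
        ((u k) ^ 2) := fact3 _ _ _
  have f3 : (∑ i, (u i) ^ 2) * (∑ i, (u i) ^ 2) *
      (∑ i, (u i) ^ 2 * ω i / (ωt i) ^ 2) =
      ∑ i, ∑ j, ∑ k, ((u i) ^ 2) * ((u j) ^ 2) *
        ((u k) ^ 2 * ω k / (ωt k) ^ 2) := fact3 _ _ _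
  have split : ∑ i, ∑ j, ∑ k, (u i) ^ 2 * (u j) ^ 2 * (u k) ^ 2 *
      (ω i / (ωt j * ωt k) - ω i / (ωt i) ^ 2 +
       (ω j / (ωt i * ωt k) - ω j / (ωt j) ^ 2) +
       (ω k / (ωt i * ωt j) - ω k / (ωt k) ^ 2)) =
      (∑ i, ∑ j, ∑ k, ((u i) ^ 2 * ω i) * ((u j) ^ 2 / ωt j) *
        ((u k) ^ 2 / ωt k)) +
      (∑ i, ∑ j, ∑ k, ((u i) ^ 2 / ωt i) * ((u j) ^ 2 * ω j) *
        ((u k) ^ 2 / ωt k)) +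
      (∑ i, ∑ j, ∑ k, ((u i) ^ 2 / ωt i) * ((u j) ^ 2 / ωt j) *
        ((u k) ^ 2 * ω k)) -
      (∑ i, ∑ j, ∑ k, ((u i) ^ 2 * ω i / (ωt i) ^ 2) * ((u j) ^ 2) *
        ((u k) ^ 2)) -
      (∑ i, ∑ j, ∑ k, ((u i) ^ 2) * ((u j) ^ 2 * ω j / (ωt j) ^ 2) *
        ((u k) ^ 2)) -
      (∑ i, ∑ j, ∑ k, ((u i) ^ 2) * ((u j) ^ 2) *
        ((u k) ^ 2 * ω k / (ωt k) ^ 2)) := by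
    simp only [← Finset.sum_add_distrib, ← Finset.sum_sub_distrib]
    refine Finset.sum_congr rfl fun i _ => Finset.sum_congr rfl fun j _ =>
      Finset.sum_congr rfl fun k _ => ?_
    ring
  have main : (∑ i, (u i) ^ 2 * ω i / (ωt i) ^ 2) ≤
      (∑ i, (u i) ^ 2 * ω i) * ((∑ i, (u i) ^ 2 / ωt i) *
        (∑ i, (u i) ^ 2 / ωt i)) := by
    rw [split, ← e1, ← e2, ← e3, ← f1, ← f2, ← f3, hu] at key
    nlinarith [key]
  calc (∑ i, (u i) ^ 2 / ωt i)⁻¹ * (∑ i, (u i) ^ 2 * ω i / (ωt i) ^ 2) *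
      (∑ i, (u i) ^ 2 / ωt i)⁻¹
      = (∑ i, (u i) ^ 2 * ω i / (ωt i) ^ 2) /
        ((∑ i, (u i) ^ 2 / ωt i) * (∑ i, (u i) ^ 2 / ωt i)) := by
        field_simp
    _ ≤ ∑ i, (u i) ^ 2 * ω i := by
        rw [div_le_iff₀ (mul_pos hS1 hS1)]
        exact main
end
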